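/- arXiv:1810.02411 — 3 statements merged into one kernel-verified Lean document; each statement's English description precedes it below -/
import Mathlib

section
/- For the Maxwell–Boltzmann family P_λ on a finite set X of reals with at least two distinct squared values, the entropy H(P_λ) is a strictly monotonically decreasing function of λ for λ ≥ 0. -/
/-- The Maxwell–Boltzmann distribution with rate parameter `lam`. -/
noncomputable def mbDist {ι : Type*} [Fintype ι] (a : ι → ℝ) (lam : ℝ) (i : ι) : ℝ :=
  Real.exp (-lam * (a i) ^ 2) / ∑ j, Real.exp (-lam * (a j) ^ 2)

/-- Shannon entropy (in bits). -/
noncomputable def shannonEntropy {ι : Type*} [Fintype ι] (p : ι → ℝ) : ℝ :=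
  -∑ i, p i * Real.logb 2 (p i)

/-!
Write `Zₖ(β) = ∑ᵢ Eᵢᵏ e^{-β Eᵢ}` for the energies `Eᵢ = aᵢ²`. In nats the entropy of the Gibbs
distribution `e^{-β Eᵢ} / Z₀` is `log Z₀ + β Z₁ / Z₀`, and since `Zₖ' = -Zₖ₊₁` its derivative is
`-β (Z₂ Z₀ - Z₁²) / Z₀²`, i.e. `-β` times the variance of the energy. The variance is positive as
soon as the energy is not constant (a strict weighted Cauchy–Schwarz inequality, read off from
Lagrange's identity), so the entropy has negative derivative for `β > 0`.
-/

open Real Finset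

section CauchySchwarz

variable {ι R : Type*} [Fintype ι]

theorem sum_sum_sub_sq_mul_mul [CommRing R] (f w : ι → R) :
    ∑ i, ∑ j, (f i - f j) ^ 2 * (w i * w j) =
      2 * ((∑ i, f i ^ 2 * w i) * ∑ i, w i - (∑ i, f i * w i) ^ 2) := by
  calc ∑ i, ∑ j, (f i - f j) ^ 2 * (w i * w j)
      = ∑ i, ∑ j, (f i ^ 2 * w i * w j + w i * (f j ^ 2 * w j) - 2 * (f i * w i * (f j * w j))) :=
        sum_congr rfl fun i _ => sum_congr rfl fun j _ => by ring
    _ = _ := by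
        simp only [sum_add_distrib, sum_sub_distrib, ← mul_sum, ← sum_mul]
        ring

theorem sq_sum_mul_lt_sum_sq_mul_mul_sum [CommRing R] [LinearOrder R] [IsStrictOrderedRing R]
    {f w : ι → R} (hw : ∀ i, 0 < w i) (hf : ∃ i j, f i ≠ f j) :
    (∑ i, f i * w i) ^ 2 < (∑ i, f i ^ 2 * w i) * ∑ i, w i := by
  obtain ⟨i₀, j₀, hij⟩ := hf
  have hterm : ∀ i j, 0 ≤ (f i - f j) ^ 2 * (w i * w j) := fun i j =>
    mul_nonneg (sq_nonneg _) (mul_pos (hw i) (hw j)).le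
  have hpos : 0 < ∑ i, ∑ j, (f i - f j) ^ 2 * (w i * w j) :=
    sum_pos' (fun i _ => sum_nonneg fun j _ => hterm i j)
      ⟨i₀, mem_univ _, sum_pos' (fun j _ => hterm i₀ j)
        ⟨j₀, mem_univ _,
          mul_pos (sq_pos_of_ne_zero (sub_ne_zero.mpr hij)) (mul_pos (hw i₀) (hw j₀))⟩⟩
  rw [sum_sum_sub_sq_mul_mul] at hpos
  linarith

end CauchySchwarz

section Boltzmann

variable {ι : Type*} [Fintype ι]

noncomputable def boltzmannMoment (E : ι → ℝ) (k : ℕ) (β : ℝ) : ℝ :=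
  ∑ i, E i ^ k * exp (-β * E i)

theorem boltzmannMoment_zero (E : ι → ℝ) (β : ℝ) :
    boltzmannMoment E 0 β = ∑ i, exp (-β * E i) := by
  simp [boltzmannMoment]

theorem boltzmannMoment_zero_pos [Nonempty ι] (E : ι → ℝ) (β : ℝ) :
    0 < boltzmannMoment E 0 β := by
  rw [boltzmannMoment_zero]
  exact sum_pos (fun i _ => exp_pos _) univ_nonempty

theorem hasDerivAt_boltzmannMoment (E : ι → ℝ) (k : ℕ) (β : ℝ) :
    HasDerivAt (boltzmannMoment E k) (-boltzmannMoment E (k + 1) β) β := by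
  have hterm : ∀ i ∈ (univ : Finset ι), HasDerivAt (fun b => E i ^ k * exp (-b * E i))
      (E i ^ k * (exp (-β * E i) * (-1 * E i))) β := fun i _ =>
    ((hasDerivAt_id β).neg.mul_const (E i)).exp.const_mul (E i ^ k)
  refine (HasDerivAt.fun_sum hterm).congr_deriv ?_
  rw [boltzmannMoment, ← sum_neg_distrib]
  exact sum_congr rfl fun i _ => by ring

theorem sq_boltzmannMoment_one_lt (E : ι → ℝ) (β : ℝ) (hE : ∃ i j, E i ≠ E j) :
    boltzmannMoment E 1 β ^ 2 < boltzmannMoment E 2 β * boltzmannMoment E 0 β := by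
  simpa [boltzmannMoment] using sq_sum_mul_lt_sum_sq_mul_mul_sum (fun i => exp_pos (-β * E i)) hE

noncomputable def gibbsEntropy (E : ι → ℝ) (β : ℝ) : ℝ :=
  log (boltzmannMoment E 0 β) + β * boltzmannMoment E 1 β / boltzmannMoment E 0 β

theorem shannonEntropy_gibbs [Nonempty ι] (E : ι → ℝ) (β : ℝ) :
    shannonEntropy (fun i => exp (-β * E i) / ∑ j, exp (-β * E j)) = gibbsEntropy E β / log 2 := by
  have hZ := boltzmannMoment_zero_pos E β
  have hM0 := (boltzmannMoment_zero E β).symm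
  have hM1 : ∑ i, E i ^ 1 * exp (-β * E i) = boltzmannMoment E 1 β := rfl
  rw [hM0, gibbsEntropy]
  set Z := boltzmannMoment E 0 β
  have hterm : ∀ i, exp (-β * E i) / Z * logb 2 (exp (-β * E i) / Z) =
      -β / (Z * log 2) * (E i ^ 1 * exp (-β * E i)) - log Z / (Z * log 2) * exp (-β * E i) :=
    fun i => by
      have hlog2 : log 2 ≠ 0 := (log_pos one_lt_two).ne'
      rw [logb, log_div (exp_pos _).ne' hZ.ne', log_exp]
      field_simp
  rw [shannonEntropy, sum_congr rfl fun i _ => hterm i, sum_sub_distrib, ← mul_sum, ← mul_sum,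
    hM1, hM0]
  field_simp
  ring

theorem hasDerivAt_gibbsEntropy [Nonempty ι] (E : ι → ℝ) (β : ℝ) :
    HasDerivAt (gibbsEntropy E)
      (-(β * (boltzmannMoment E 2 β * boltzmannMoment E 0 β - boltzmannMoment E 1 β ^ 2)) /
        boltzmannMoment E 0 β ^ 2) β := by
  have hZ := hasDerivAt_boltzmannMoment E 0 β
  have hS := hasDerivAt_boltzmannMoment E 1 β
  have hZ0 := (boltzmannMoment_zero_pos E β).ne'
  refine ((hZ.log hZ0).add (((hasDerivAt_id β).mul hS).div hZ hZ0)).congr_deriv ?_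
  simp only [Pi.mul_apply, id_eq]
  field_simp
  ring

theorem gibbsEntropy_strictAntiOn (E : ι → ℝ) (hE : ∃ i j, E i ≠ E j) :
    StrictAntiOn (gibbsEntropy E) (Set.Ici 0) := by
  have : Nonempty ι := let ⟨i, _⟩ := hE; ⟨i⟩
  refine strictAntiOn_of_deriv_neg (convex_Ici 0)
    (fun β _ => (hasDerivAt_gibbsEntropy E β).continuousAt.continuousWithinAt) fun β hβ => ?_
  rw [interior_Ici] at hβ
  rw [(hasDerivAt_gibbsEntropy E β).deriv, neg_div, neg_lt_zero]
  have hvar := sq_boltzmannMoment_one_lt E β hE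
  have hZ := boltzmannMoment_zero_pos E β
  exact div_pos (mul_pos hβ (sub_pos.mpr hvar)) (pow_pos hZ 2)

end Boltzmann

theorem mb_entropy_strictAntiOn_general {ι : Type*} [Fintype ι]
    (a : ι → ℝ) (hdist : ∃ i j : ι, (a i) ^ 2 ≠ (a j) ^ 2) :
    StrictAntiOn (fun lam : ℝ => shannonEntropy (mbDist a lam)) (Set.Ici 0) := by
  have : Nonempty ι := let ⟨i, _⟩ := hdist; ⟨i⟩
  have hH (lam : ℝ) : shannonEntropy (mbDist a lam) = gibbsEntropy (a · ^ 2) lam / log 2 :=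
    shannonEntropy_gibbs _ lam
  simp only [hH]
  intro x hx y hy hxy
  exact div_lt_div_of_pos_right (gibbsEntropy_strictAntiOn _ hdist hx hy hxy) (log_pos one_lt_two)

/-- If the alphabet has at least two distinct squared values, the
entropy `H(P_λ)` of the Maxwell–Boltzmann family is a strictly monotonically
decreasing function of `λ` on `λ ≥ 0`. -/
theorem mb_entropy_strictAntiOn {ι : Type*} [Fintype ι] [Nonempty ι]
    (a : ι → ℝ) (hdist : ∃ i j : ι, (a i) ^ 2 ≠ (a j) ^ 2) :
    StrictAntiOn (fun lam : ℝ => shannonEntropy (mbDist a lam)) (Set.Ici 0) :=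
  mb_entropy_strictAntiOn_general a hdist
end

section
/- No-overflow guarantee of the framing rule: consider successive encoding of k bits into a frame of n symbols using codes C₁ and C₂ where C₂ maps information words of length log₂M bits each to single symbols (rate R₂ = log₂ M) and ⌈k/R₂⌉ ≤ n. If at each iteration ℓ the encoder uses C₁ exactly when n − Σ_{i<ℓ} l(x^{(i)}) − l_max(X₁) ≥ ⌈(k − Σ_{i<ℓ} l(b^{(i)}) − l_min(B₁))/R₂⌉ and otherwise switches permanently to C₂, then the total number of output symbols never exceeds n. -/
/-- Ceiling division on naturals: `⌈a / b⌉`. -/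
def ceilingDiv (a b : ℕ) : ℕ := (a + b - 1) / b

/-- No-overflow guarantee of the framing rule. Encoding `k` bits into
a frame of `n` symbols, with `C₂` of fixed rate `R₂` bits/symbol and
`⌈k/R₂⌉ ≤ n`, suppose the encoder uses `C₁` for `s` iterations, where at each
such iteration `ℓ` the switch test
`n − Σ_{i<ℓ} l(x⁽ⁱ⁾) − l_max(X₁) ≥ ⌈(k − Σ_{i<ℓ} l(b⁽ⁱ⁾) − l_min(B₁))/R₂⌉`
held (C₁ words have input length ≥ `lmin` and output length ≤ `lmax`), and then
switches permanently to `C₂`, which needs `⌈(remaining bits)/R₂⌉` symbols. Then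
the total number of output symbols never exceeds `n`. -/
theorem framing_no_overflow
    (k n R₂ lmax lmin : ℕ) (hR₂ : 0 < R₂)
    (hkn : ceilingDiv k R₂ ≤ n)
    (s : ℕ) (lb lx : ℕ → ℕ)
    (hC1 : ∀ i < s, lmin ≤ lb i ∧ lx i ≤ lmax)
    (hcond : ∀ m < s,
        (∑ i ∈ Finset.range m, lx i) + lmax +
          ceilingDiv (k - ((∑ i ∈ Finset.range m, lb i) + lmin)) R₂ ≤ n)
    (hbits : (∑ i ∈ Finset.range s, lb i) ≤ k) :
    (∑ i ∈ Finset.range s, lx i) +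
      ceilingDiv (k - ∑ i ∈ Finset.range s, lb i) R₂ ≤ n := by
  cases s with
  | zero => simpa using hkn
  | succ m =>
    have h1 := hcond m (Nat.lt_succ_self m)
    have h2 := hC1 m (Nat.lt_succ_self m)
    rw [Finset.sum_range_succ, Finset.sum_range_succ]
    have hmono : ceilingDiv (k - ((∑ i ∈ Finset.range m, lb i) + lb m)) R₂ ≤
        ceilingDiv (k - ((∑ i ∈ Finset.range m, lb i) + lmin)) R₂ := by
      apply Nat.div_le_div_right
      have : k - ((∑ i ∈ Finset.range m, lb i) + lb m) ≤
          k - ((∑ i ∈ Finset.range m, lb i) + lmin) :=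
        Nat.sub_le_sub_left (Nat.add_le_add_left h2.1 _) k
      omega
    calc (∑ i ∈ Finset.range m, lx i) + lx m +
          ceilingDiv (k - ((∑ i ∈ Finset.range m, lb i) + lb m)) R₂
        ≤ (∑ i ∈ Finset.range m, lx i) + lmax +
          ceilingDiv (k - ((∑ i ∈ Finset.range m, lb i) + lmin)) R₂ := by
          have := h2.2; omega
      _ ≤ n := h1
end

section
/- Unique decodability under framing: under the framing rule in which the switch condition from code C₁ to C₂ at iteration ℓ depends only on the cumulative lengths Σ_{i<ℓ} l(b^{(i)}) and Σ_{i<ℓ} l(x^{(i)}) from previous iterations (and fixed constants k, n, l_max(X₁), l_min(B₁), R₂), a decoder that has correctly decoded iterations 1,...,ℓ−1 can determine which code was used at iteration ℓ, and hence (by prefix-freeness of both codes) the entire frame is uniquely decodable by induction. -/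
/-- A prefix-free code: no codeword is empty and no codeword is a prefix of a
different codeword (hence the code is uniquely and instantaneously decodable). -/
def PrefixFreeCode {α : Type*} (S : Set (List α)) : Prop :=
  [] ∉ S ∧ ∀ a ∈ S, ∀ b ∈ S, a <+: b → a = b

/-- The framing switch test at a point where `b` information bits have been
consumed and `s` symbols produced: code `C₁` is used exactly when
`n − s − l_max(X₁) ≥ ⌈(k − b − l_min(B₁))/R₂⌉`. It depends only on the
cumulative lengths from previous iterations and fixed constants. -/
def framingSwitchTest (k n lmax lmin R₂ b s : ℕ) : Prop :=
  s + lmax + (k - (b + lmin) + R₂ - 1) / R₂ ≤ n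

/-- A valid encoder run: a sequence of codewords, where at each iteration the
codeword is drawn from `C₁` if the switch test (evaluated on the cumulative bit
count `b` and symbol count `s` of previous iterations) holds, and from `C₂`
otherwise; `lb₁ w` (resp. `lb₂ w`) is the number of information bits encoded by
codeword `w` of `C₁` (resp. `C₂`). -/
inductive ValidRun {α : Type*} (C₁ C₂ : Set (List α)) (sw : ℕ → ℕ → Prop)
    (lb₁ lb₂ : List α → ℕ) : List (List α) → ℕ → ℕ → Prop
  | nil (b s : ℕ) : ValidRun C₁ C₂ sw lb₁ lb₂ [] b s
  | cons₁ (w : List α) (ws : List (List α)) (b s : ℕ) :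
      sw b s → w ∈ C₁ →
      ValidRun C₁ C₂ sw lb₁ lb₂ ws (b + lb₁ w) (s + w.length) →
      ValidRun C₁ C₂ sw lb₁ lb₂ (w :: ws) b s
  | cons₂ (w : List α) (ws : List (List α)) (b s : ℕ) :
      ¬ sw b s → w ∈ C₂ →
      ValidRun C₁ C₂ sw lb₁ lb₂ ws (b + lb₂ w) (s + w.length) →
      ValidRun C₁ C₂ sw lb₁ lb₂ (w :: ws) b s

lemma prefixFree_head_eq {α : Type*} {C : Set (List α)}
    (h : PrefixFreeCode C) {w v : List α} (hw : w ∈ C) (hv : v ∈ C)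
    {a b : List α} (heq : w ++ a = v ++ b) : w = v := by
  have h1 : w <+: v ++ b := heq ▸ List.prefix_append w a
  have h2 : v <+: v ++ b := List.prefix_append v b
  rcases List.prefix_or_prefix_of_prefix h1 h2 with hp | hp
  · exact h.2 w hw v hv hp
  · exact (h.2 v hv w hw hp).symm

/-- Unique decodability under framing. Since the switch condition
between the two prefix-free codes at each iteration depends only on the
cumulative information-bit and symbol counts of previous iterations (and the
fixed constants `k, n, l_max(X₁), l_min(B₁), R₂`), any two valid encoder runs
starting from the same state that produce the same symbol frame are identical;
i.e., the entire frame is uniquely decodable. -/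
theorem framing_uniquely_decodable {α : Type*}
    (C₁ C₂ : Set (List α)) (h₁ : PrefixFreeCode C₁) (h₂ : PrefixFreeCode C₂)
    (k n lmax lmin R₂ : ℕ) (lb₁ lb₂ : List α → ℕ)
    (ws vs : List (List α)) (b s : ℕ)
    (hws : ValidRun C₁ C₂ (framingSwitchTest k n lmax lmin R₂) lb₁ lb₂ ws b s)
    (hvs : ValidRun C₁ C₂ (framingSwitchTest k n lmax lmin R₂) lb₁ lb₂ vs b s)
    (hsame : ws.flatten = vs.flatten) :
    ws = vs := by
  induction hws generalizing vs with
  | nil b s =>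
    cases hvs with
    | nil => rfl
    | cons₁ v vs' b s _ hv _ =>
      simp only [List.flatten_nil, List.flatten_cons] at hsame
      obtain ⟨hvnil, -⟩ := List.append_eq_nil_iff.mp hsame.symm
      exact absurd (hvnil ▸ hv) h₁.1
    | cons₂ v vs' b s _ hv _ =>
      simp only [List.flatten_nil, List.flatten_cons] at hsame
      obtain ⟨hvnil, -⟩ := List.append_eq_nil_iff.mp hsame.symm
      exact absurd (hvnil ▸ hv) h₂.1
  | cons₁ w ws b s hsw hw hrun ih =>
    cases hvs with
    | nil =>
      simp only [List.flatten_nil, List.flatten_cons] at hsame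
      obtain ⟨hwnil, -⟩ := List.append_eq_nil_iff.mp hsame
      exact absurd (hwnil ▸ hw) h₁.1
    | cons₁ v vs' _ _ hsw' hv hrun' =>
      simp only [List.flatten_cons] at hsame
      have hwv : w = v := prefixFree_head_eq h₁ hw hv hsame
      subst hwv
      have htail := List.append_cancel_left hsame
      rw [ih vs' hrun' htail]
    | cons₂ v vs' _ _ hsw' hv hrun' => exact absurd hsw hsw'
  | cons₂ w ws b s hsw hw hrun ih =>
    cases hvs with
    | nil =>
      simp only [List.flatten_nil, List.flatten_cons] at hsame
      obtain ⟨hwnil, -⟩ := List.append_eq_nil_iff.mp hsame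
      exact absurd (hwnil ▸ hw) h₂.1
    | cons₁ v vs' _ _ hsw' hv hrun' => exact absurd hsw' hsw
    | cons₂ v vs' _ _ hsw' hv hrun' =>
      simp only [List.flatten_cons] at hsame
      have hwv : w = v := prefixFree_head_eq h₂ hw hv hsame
      subst hwv
      have htail := List.append_cancel_left hsame
      rw [ih vs' hrun' htail]
end
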